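/- arXiv:1412.3391 — 8 statements merged into one kernel-verified Lean document; each statement's English description precedes it below -/
import Mathlib

section
/- Let 0 < α < 1/2 and let the discrete dissipation operator be defined on sequences a = (a_k)_{k≥0} by (ℒ^α a)_k = Σ_{n=0}^{k-1} (a_k − a_n) 2^{2αn} + Σ_{n=k+1}^{∞} (a_k − a_n) 2^{2αk} 2^{k−n}. If a ∈ ℓ^∞ and Σ_{k} |a_k − a_{k-1}| 2^{sk} < ∞ for some s > 2α, then Σ_{k=0}^{∞} (ℒ^α a)_k 2^{−k} = 0. -/
/-- The discrete dissipation operator `(ℒ^α a)_k`. -/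
noncomputable def Ldiss (α : ℝ) (a : ℕ → ℝ) (k : ℕ) : ℝ :=
  (∑ n ∈ Finset.range k, (a k - a n) * (2:ℝ) ^ (2 * α * (n:ℝ))) +
  ∑' n : ℕ, (a k - a (k + 1 + n)) * (2:ℝ) ^ (2 * α * (k:ℝ)) * (2:ℝ) ^ (-(1:ℝ) - (n:ℝ))

/-!
Multiplying `(ℒ^α a)_k` by `2^{-k}` writes it as the `k`-th row sum of the kernel
`K(k, n) = (a_k - a_n) 2^{2α min(k,n)} 2^{-max(k,n)}`, which is antisymmetric in `(k, n)`.
The decay of the increments of `a` gives `|K(k, n)| ≤ C 2^{-max(k,n)}`, so `K` is summable on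
`ℕ × ℕ`; its double sum is then both the sum of the row sums and, by antisymmetry, its own
negative, hence zero.
-/

theorem tsum_eq_zero_of_swap_eq_neg {β : Type*} {f : β × β → ℝ}
    (hf : ∀ p, f p.swap = -f p) : ∑' p, f p = 0 := by
  have h := (Equiv.prodComm β β).tsum_eq f
  simp only [Equiv.prodComm_apply, hf, tsum_neg] at h
  linarith

theorem abs_sub_mul_two_rpow_le_tsum {a : ℕ → ℝ} {s : ℝ} (hs : 0 ≤ s)
    (hsum : Summable fun j : ℕ => |a (j + 1) - a j| * (2:ℝ) ^ (s * ((j:ℝ) + 1)))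
    {m k : ℕ} (hmk : m ≤ k) :
    |a k - a m| * (2:ℝ) ^ (s * m) ≤ ∑' j : ℕ, |a (j + 1) - a j| * (2:ℝ) ^ (s * ((j:ℝ) + 1)) := by
  have htel : a k - a m = ∑ j ∈ Finset.Ico m k, (a (j + 1) - a j) :=
    (Finset.sum_Ico_sub a hmk).symm
  calc |a k - a m| * (2:ℝ) ^ (s * m)
      ≤ ∑ j ∈ Finset.Ico m k, |a (j + 1) - a j| * (2:ℝ) ^ (s * m) := by
        rw [← Finset.sum_mul, htel]
        gcongr
        exact Finset.abs_sum_le_sum_abs _ _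
    _ ≤ ∑ j ∈ Finset.Ico m k, |a (j + 1) - a j| * (2:ℝ) ^ (s * ((j:ℝ) + 1)) := by
        gcongr with j hj
        · norm_num
        · have : (m:ℝ) ≤ j := by exact_mod_cast (Finset.mem_Ico.mp hj).1
          linarith
    _ ≤ _ := hsum.sum_le_tsum _ fun j _ => by positivity

noncomputable def dissKernel (α : ℝ) (a : ℕ → ℝ) (p : ℕ × ℕ) : ℝ :=
  (a p.1 - a p.2) * (2:ℝ) ^ (2 * α * ((min p.1 p.2 : ℕ) : ℝ)) *
    (2:ℝ) ^ (-((max p.1 p.2 : ℕ) : ℝ))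

theorem dissKernel_swap (α : ℝ) (a : ℕ → ℝ) (p : ℕ × ℕ) :
    dissKernel α a p.swap = -dissKernel α a p := by
  simp only [dissKernel, Prod.fst_swap, Prod.snd_swap, min_comm p.2, max_comm p.2]
  ring

theorem abs_dissKernel_le {α s : ℝ} {a : ℕ → ℝ} (hs0 : 0 ≤ s) (hs : 2 * α ≤ s)
    (hsum : Summable fun j : ℕ => |a (j + 1) - a j| * (2:ℝ) ^ (s * ((j:ℝ) + 1))) (p : ℕ × ℕ) :
    |dissKernel α a p| ≤ (∑' j : ℕ, |a (j + 1) - a j| * (2:ℝ) ^ (s * ((j:ℝ) + 1))) *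
      (2:ℝ) ^ (-((max p.1 p.2 : ℕ) : ℝ)) := by
  have hdiff : |a p.1 - a p.2| * (2:ℝ) ^ (s * (min p.1 p.2 : ℕ)) ≤
      ∑' j : ℕ, |a (j + 1) - a j| * (2:ℝ) ^ (s * ((j:ℝ) + 1)) := by
    rcases le_total p.1 p.2 with h | h
    · rw [min_eq_left h, abs_sub_comm]
      exact abs_sub_mul_two_rpow_le_tsum hs0 hsum h
    · rw [min_eq_right h]
      exact abs_sub_mul_two_rpow_le_tsum hs0 hsum h
  rw [dissKernel, abs_mul, abs_mul, abs_of_pos (Real.rpow_pos_of_pos two_pos _),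
    abs_of_pos (Real.rpow_pos_of_pos two_pos _)]
  gcongr
  refine le_trans ?_ hdiff
  gcongr
  norm_num

theorem summable_two_rpow_neg_max :
    Summable fun p : ℕ × ℕ => (2:ℝ) ^ (-((max p.1 p.2 : ℕ) : ℝ)) := by
  set r : ℝ := (2:ℝ) ^ (-(1:ℝ) / 2)
  have hr : r < 1 := Real.rpow_lt_one_of_one_lt_of_neg (by norm_num) (by norm_num)
  have hgeo : Summable fun k : ℕ => r ^ k := summable_geometric_of_lt_one (by positivity) hr
  refine Summable.of_nonneg_of_le (fun _ => by positivity) (fun p => ?_)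
    (hgeo.mul_of_nonneg hgeo (fun _ => by positivity) (fun _ => by positivity))
  have hmax : ((p.1 : ℝ) + p.2) / 2 ≤ ((max p.1 p.2 : ℕ) : ℝ) := by
    push_cast
    linarith [le_max_left (p.1 : ℝ) p.2, le_max_right (p.1 : ℝ) p.2]
  calc (2:ℝ) ^ (-((max p.1 p.2 : ℕ) : ℝ))
      ≤ (2:ℝ) ^ (-(1:ℝ) / 2 * p.1 + -(1:ℝ) / 2 * p.2) :=
        Real.rpow_le_rpow_of_exponent_le (by norm_num) (by linarith)
    _ = r ^ p.1 * r ^ p.2 := by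
        rw [Real.rpow_add (by norm_num), Real.rpow_mul_natCast (by norm_num),
          Real.rpow_mul_natCast (by norm_num)]

theorem summable_dissKernel {α s : ℝ} {a : ℕ → ℝ} (hs0 : 0 ≤ s) (hs : 2 * α ≤ s)
    (hsum : Summable fun j : ℕ => |a (j + 1) - a j| * (2:ℝ) ^ (s * ((j:ℝ) + 1))) :
    Summable (dissKernel α a) :=
  Summable.of_norm_bounded (summable_two_rpow_neg_max.mul_left _)
    (abs_dissKernel_le hs0 hs hsum)

theorem Ldiss_mul_two_rpow_neg_eq_tsum (α : ℝ) (a : ℕ → ℝ) (k : ℕ)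
    (hrow : Summable fun n => dissKernel α a (k, n)) :
    Ldiss α a k * (2:ℝ) ^ (-(k:ℝ)) = ∑' n, dissKernel α a (k, n) := by
  have hdiag : dissKernel α a (k, k) = 0 := by simp [dissKernel]
  rw [← hrow.sum_add_tsum_nat_add (k + 1), Finset.sum_range_succ, hdiag, add_zero, Ldiss,
    add_mul, Finset.sum_mul, ← tsum_mul_right]
  congr 1
  · refine Finset.sum_congr rfl fun n hn => ?_
    have hnk : n ≤ k := (Finset.mem_range.mp hn).le
    simp only [dissKernel, min_eq_right hnk, max_eq_left hnk]
  · refine tsum_congr fun n => ?_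
    have hkn : k ≤ k + 1 + n := by omega
    rw [add_comm n]
    simp only [dissKernel, min_eq_left hkn, max_eq_right hkn, Nat.cast_add, Nat.cast_one]
    rw [show -((k:ℝ) + 1 + n) = (-1 - n) + -k by ring, Real.rpow_add two_pos]
    ring

theorem stmt0_general (α : ℝ) (hα0 : 0 < α) (a : ℕ → ℝ)
    (s : ℝ) (hs : 2 * α < s)
    (hsum : Summable (fun k : ℕ => |a (k+1) - a k| * (2:ℝ) ^ (s * ((k:ℝ)+1)))) :
    ∑' k : ℕ, Ldiss α a k * (2:ℝ) ^ (-(k:ℝ)) = 0 := by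
  have hK := summable_dissKernel (by linarith) hs.le hsum
  calc ∑' k : ℕ, Ldiss α a k * (2:ℝ) ^ (-(k:ℝ))
      = ∑' k : ℕ, ∑' n : ℕ, dissKernel α a (k, n) :=
        tsum_congr fun k => Ldiss_mul_two_rpow_neg_eq_tsum α a k (hK.prod_factor k)
    _ = ∑' p, dissKernel α a p := hK.tsum_prod.symm
    _ = 0 := tsum_eq_zero_of_swap_eq_neg (dissKernel_swap α a)

theorem stmt0 (α : ℝ) (hα0 : 0 < α) (hα1 : α < 1/2) (a : ℕ → ℝ)
    (hbdd : ∃ M : ℝ, ∀ k, |a k| ≤ M)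
    (s : ℝ) (hs : 2 * α < s)
    (hsum : Summable (fun k : ℕ => |a (k+1) - a k| * (2:ℝ) ^ (s * ((k:ℝ)+1)))) :
    ∑' k : ℕ, Ldiss α a k * (2:ℝ) ^ (-(k:ℝ)) = 0 :=
  stmt0_general α hα0 a s hs hsum
end

section
/- Let 0 < α < 1/2, s > 0, and a ∈ X^s. Set b_{k,s} = (a_k − a_{k-1}) 2^{sk} and c_s = (3/4)(2^s − 1)^{-1}(1 − 1/(2^{s+1} − 1)). If for some index k ≥ 2 one has b_{k,s} > c_s · sup_{j≥1} b_{j,s} and b_{k,s} > 0, then ((ℒ^α a)_k − (ℒ^α a)_{k-1}) 2^{sk} ≥ (2^{2α(k−1)} − 1)/(2^{2α} − 1) · b_{k,s}. -/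
open Finset Real

namespace Stmt2Aux

lemma pow_half_eq (n : ℕ) : (2:ℝ) ^ (-(1:ℝ) - (n:ℝ)) = (1/2:ℝ)^(n+1) := by
  have h : (-(1:ℝ) - (n:ℝ)) = -(((n+1 : ℕ)) : ℝ) := by push_cast; ring
  rw [h, Real.rpow_neg (by norm_num), Real.rpow_natCast, one_div, inv_pow]

lemma summable_geom_r {r : ℝ} (h0 : 0 ≤ r) (h1 : r < 1) :
    Summable (fun n : ℕ => r^(n+1)) :=
  ((summable_geometric_of_lt_one h0 h1).mul_right r).congr (fun n => (pow_succ r n).symm)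

lemma summable_half : Summable (fun n : ℕ => (1/2:ℝ)^(n+1)) :=
  summable_geom_r (by norm_num) (by norm_num)

lemma tsum_geom_r {r : ℝ} (h0 : 0 ≤ r) (h1 : r < 1) :
    ∑' n : ℕ, r^(n+1) = r / (1 - r) := by
  have h : ∀ n : ℕ, r^(n+1) = r^n * r := fun n => pow_succ _ _
  rw [tsum_congr h, tsum_mul_right, tsum_geometric_of_lt_one h0 h1, div_eq_inv_mul]

lemma tsum_half : ∑' n : ℕ, (1/2:ℝ)^(n+1) = 1 := by
  rw [tsum_geom_r (by norm_num) (by norm_num)]; norm_num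

noncomputable def S (a : ℕ → ℝ) (j : ℕ) : ℝ := ∑' n : ℕ, (a j - a (j+1+n)) * (1/2:ℝ)^(n+1)

lemma summable_term (a : ℕ → ℝ) (Ca : ℝ) (hCa : ∀ j, |a j| ≤ Ca) (j : ℕ) :
    Summable (fun n : ℕ => (a j - a (j+1+n)) * (1/2:ℝ)^(n+1)) := by
  apply Summable.of_norm_bounded (summable_half.mul_left (2*Ca))
  intro n
  rw [Real.norm_eq_abs, abs_mul, abs_pow]
  have h1 : |a j - a (j+1+n)| ≤ 2*Ca := by
    calc |a j - a (j+1+n)| ≤ |a j| + |a (j+1+n)| := abs_sub _ _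
    _ ≤ 2*Ca := by have := hCa j; have := hCa (j+1+n); linarith
  have h2 : |(1/2:ℝ)| = 1/2 := by norm_num
  rw [h2]
  exact mul_le_mul_of_nonneg_right h1 (by positivity)

lemma S_rec (a : ℕ → ℝ) (Ca : ℝ) (hCa : ∀ j, |a j| ≤ Ca) (j : ℕ) :
    S a j = (a j - a (j+1)) + S a (j+1) / 2 := by
  have h0 := summable_term a Ca hCa j
  rw [S, Summable.tsum_eq_zero_add h0]
  have hcongr : ∀ n : ℕ, (a j - a (j+1+(n+1))) * (1/2:ℝ)^(n+1+1)
      = (a j - a (j+1)) * ((1/2:ℝ)^(n+1) * (1/2))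
        + ((a (j+1) - a ((j+1)+1+n)) * (1/2:ℝ)^(n+1)) * (1/2) := by
    intro n
    have he : j+1+(n+1) = (j+1)+1+n := by omega
    rw [he]; ring
  rw [tsum_congr hcongr, Summable.tsum_add (((summable_half.mul_right (1/2)).mul_left _))
      ((summable_term a Ca hCa (j+1)).mul_right (1/2)), tsum_mul_left, tsum_mul_right,
      tsum_mul_right, tsum_half, ← S]
  norm_num
  ring

lemma S_lb (a : ℕ → ℝ) (Ca B s : ℝ) (hs : 0 < s)
    (hCa : ∀ j, |a j| ≤ Ca)
    (hB : ∀ j : ℕ, 1 ≤ j → (a j - a (j-1)) * (2:ℝ) ^ (s * (j:ℝ)) ≤ B)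
    (k : ℕ) :
    -(S a k) ≤ B * ((2:ℝ)^(s*(k:ℝ)))⁻¹ * (2 / ((2:ℝ)^(s+1) - 1)) := by
  set r : ℝ := (2:ℝ)^(-s) with hrdef
  have hr0 : 0 < r := Real.rpow_pos_of_pos (by norm_num) _
  have hr1 : r < 1 := Real.rpow_lt_one_of_one_lt_of_neg (by norm_num) (by linarith)
  have hEk : (0:ℝ) < (2:ℝ)^(s*(k:ℝ)) := Real.rpow_pos_of_pos (by norm_num) _
  -- termwise telescoping bound
  have hterm : ∀ n : ℕ, a (k+1+n) - a k ≤ B * ((2:ℝ)^(s*(k:ℝ)))⁻¹ * r * ((1 - r^(n+1))/(1-r)) := by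
    intro n
    have tel : ∑ i ∈ Finset.range (n+1), (a (k+i+1) - a (k+i)) = a (k+(n+1)) - a k :=
      Finset.sum_range_sub (fun i => a (k+i)) (n+1)
    have hke : k+1+n = k+(n+1) := by omega
    rw [hke, ← tel]
    have hbound : ∀ i ∈ Finset.range (n+1),
        a (k+i+1) - a (k+i) ≤ (B * ((2:ℝ)^(s*(k:ℝ)))⁻¹ * r) * r^i := by
      intro i _
      have h1 := hB (k+i+1) (by omega)
      have h2 : (k+i+1) - 1 = k+i := by omega
      rw [h2] at h1
      have hpow : (0:ℝ) < (2:ℝ)^(s*((k+i+1:ℕ):ℝ)) := Real.rpow_pos_of_pos (by norm_num) _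
      have h3 : a (k+i+1) - a (k+i) ≤ B * ((2:ℝ)^(s*((k+i+1:ℕ):ℝ)))⁻¹ := by
        rw [← div_eq_mul_inv, le_div_iff₀ hpow]
        exact h1
      have h4 : ((2:ℝ)^(s*((k+i+1:ℕ):ℝ)))⁻¹ = ((2:ℝ)^(s*(k:ℝ)))⁻¹ * r * r^i := by
        rw [hrdef, ← Real.rpow_natCast ((2:ℝ)^(-s)) i, ← Real.rpow_mul (by norm_num),
          ← Real.rpow_neg (by norm_num), ← Real.rpow_neg (by norm_num), ← Real.rpow_add (by norm_num),
          ← Real.rpow_add (by norm_num)]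
        congr 1
        push_cast
        ring
      rw [h4] at h3
      calc a (k+i+1) - a (k+i) ≤ B * (((2:ℝ)^(s*(k:ℝ)))⁻¹ * r * r^i) := h3
      _ = (B * ((2:ℝ)^(s*(k:ℝ)))⁻¹ * r) * r^i := by ring
    calc ∑ i ∈ Finset.range (n+1), (a (k+i+1) - a (k+i))
        ≤ ∑ i ∈ Finset.range (n+1), (B * ((2:ℝ)^(s*(k:ℝ)))⁻¹ * r) * r^i :=
          Finset.sum_le_sum hbound
    _ = (B * ((2:ℝ)^(s*(k:ℝ)))⁻¹ * r) * ((r^(n+1) - 1)/(r-1)) := by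
          rw [← Finset.mul_sum, geom_sum_eq hr1.ne (n+1)]
    _ = B * ((2:ℝ)^(s*(k:ℝ)))⁻¹ * r * ((1 - r^(n+1))/(1-r)) := by
          rw [show (r^(n+1) - 1)/(r-1) = (1 - r^(n+1))/(1-r) by
            rw [div_eq_div_iff (by linarith) (by linarith)]; ring]
  -- rewrite -S as a tsum
  set D : ℝ := B * ((2:ℝ)^(s*(k:ℝ)))⁻¹ * r * (1-r)⁻¹ with hD
  have hneg : -(S a k) = ∑' n : ℕ, (a (k+1+n) - a k) * (1/2:ℝ)^(n+1) := by
    rw [S, ← tsum_neg]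
    exact tsum_congr (fun n => by ring)
  have hsum1 : Summable (fun n : ℕ => (a (k+1+n) - a k) * (1/2:ℝ)^(n+1)) :=
    ((summable_term a Ca hCa k).neg).congr (fun n => by ring)
  have hr2 : (0:ℝ) ≤ r/2 := by linarith
  have hr3 : r/2 < 1 := by linarith
  have hsum2 : Summable (fun n : ℕ => D * ((1/2:ℝ)^(n+1) - (r/2)^(n+1))) :=
    (summable_half.sub (summable_geom_r hr2 hr3)).mul_left D
  have hle : ∀ n : ℕ, (a (k+1+n) - a k) * (1/2:ℝ)^(n+1) ≤ D * ((1/2:ℝ)^(n+1) - (r/2)^(n+1)) := by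
    intro n
    have h5 : (a (k+1+n) - a k) * (1/2:ℝ)^(n+1)
        ≤ (B * ((2:ℝ)^(s*(k:ℝ)))⁻¹ * r * ((1 - r^(n+1))/(1-r))) * (1/2:ℝ)^(n+1) :=
      mul_le_mul_of_nonneg_right (hterm n) (by positivity)
    refine h5.trans_eq ?_
    have h6 : (r/2)^(n+1) = r^(n+1) * (1/2:ℝ)^(n+1) := by
      rw [div_eq_mul_one_div, mul_pow]
    rw [hD, h6]
    field_simp
  have hfin : -(S a k) ≤ D * (1 - (r/2)/(1-(r/2))) := by
    rw [hneg]
    calc ∑' n : ℕ, (a (k+1+n) - a k) * (1/2:ℝ)^(n+1)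
        ≤ ∑' n : ℕ, D * ((1/2:ℝ)^(n+1) - (r/2)^(n+1)) := Summable.tsum_le_tsum hle hsum1 hsum2
    _ = D * (1 - (r/2)/(1-(r/2))) := by
        rw [tsum_mul_left, Summable.tsum_sub summable_half (summable_geom_r hr2 hr3), tsum_half,
          tsum_geom_r hr2 hr3]
  refine hfin.trans_eq ?_
  rw [hD, hrdef]
  have hx : (2:ℝ)^(-s) = ((2:ℝ)^s)⁻¹ := Real.rpow_neg (by norm_num) s
  have hx1 : (1:ℝ) < (2:ℝ)^s := by
    have h := Real.rpow_lt_rpow_of_exponent_lt (by norm_num : (1:ℝ) < 2) hs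
    rwa [Real.rpow_zero] at h
  have hx2 : (2:ℝ)^(s+1) = (2:ℝ)^s * 2 := by
    rw [Real.rpow_add (by norm_num), Real.rpow_one]
  rw [hx, hx2]
  set x : ℝ := (2:ℝ)^s
  have hx0 : x ≠ 0 := by positivity
  have hx3 : x - 1 ≠ 0 := by intro h; nlinarith
  have hx4 : 2*x - 1 ≠ 0 := by intro h; nlinarith
  have hxi : x⁻¹ < 1 := by rw [inv_lt_one_iff₀]; right; exact hx1
  have hxi0 : 0 < x⁻¹ := by positivity
  have key : (x⁻¹) * (1-x⁻¹)⁻¹ * (1 - (x⁻¹/2)/(1-x⁻¹/2)) = 2/(x*2-1) := by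
    have h2x : x*2-1 ≠ 0 := by intro h; nlinarith
    have h5 : (1 - x⁻¹) ≠ 0 := by intro h; nlinarith
    have h6 : (1 - x⁻¹/2) ≠ 0 := by intro h; nlinarith
    field_simp
    ring
  linear_combination (B * ((2:ℝ)^(s*(k:ℝ)))⁻¹) * key

lemma hq_pow (α : ℝ) (m : ℕ) : (2:ℝ)^(2*α*(m:ℝ)) = ((2:ℝ)^(2*α))^m := by
  rw [Real.rpow_mul (by norm_num), Real.rpow_natCast]

lemma Ldiss_eq (α : ℝ) (a : ℕ → ℝ) (j : ℕ) :
    Ldiss α a j = (∑ n ∈ Finset.range j, (a j - a n) * ((2:ℝ)^(2*α))^n)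
      + ((2:ℝ)^(2*α))^j * S a j := by
  rw [Ldiss, S, ← tsum_mul_left]
  congr 1
  · exact Finset.sum_congr rfl (fun n _ => by rw [hq_pow])
  · exact tsum_congr (fun n => by rw [pow_half_eq, ← hq_pow]; ring)

end Stmt2Aux

open Stmt2Aux in
theorem stmt2 (α s : ℝ) (hα0 : 0 < α) (hα1 : α < 1/2) (hs : 0 < s)
    (a : ℕ → ℝ) (Ca : ℝ)
    (hXs : (∀ j, |a j| ≤ Ca) ∧
      ∀ j : ℕ, |a (j+1) - a j| * (2:ℝ) ^ (s * ((j:ℝ)+1)) ≤ Ca)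
    (B : ℝ)
    (hB : ∀ j : ℕ, 1 ≤ j → (a j - a (j-1)) * (2:ℝ) ^ (s * (j:ℝ)) ≤ B)
    (k : ℕ) (hk : 2 ≤ k)
    (hkbig : (3/4) * ((2:ℝ)^s - 1)⁻¹ * (1 - 1 / ((2:ℝ)^(s+1) - 1)) * B
        < (a k - a (k-1)) * (2:ℝ) ^ (s * (k:ℝ)))
    (hpos : 0 < (a k - a (k-1)) * (2:ℝ) ^ (s * (k:ℝ))) :
    ((2:ℝ) ^ (2 * α * ((k:ℝ) - 1)) - 1) / ((2:ℝ) ^ (2 * α) - 1) *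
        ((a k - a (k-1)) * (2:ℝ) ^ (s * (k:ℝ)))
      ≤ (Ldiss α a k - Ldiss α a (k-1)) * (2:ℝ) ^ (s * (k:ℝ)) := by
  obtain ⟨hCa, -⟩ := hXs
  obtain ⟨p, rfl⟩ : ∃ p, k = p + 2 := ⟨k - 2, by omega⟩
  have hk1 : p + 2 - 1 = p + 1 := rfl
  rw [hk1] at hkbig hpos ⊢
  have hq1 : 1 < (2:ℝ)^(2*α) := by
    have h := Real.rpow_lt_rpow_of_exponent_lt (by norm_num : (1:ℝ) < 2)
      (show (0:ℝ) < 2*α by positivity)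
    rwa [Real.rpow_zero] at h
  have hq2 : (2:ℝ)^(2*α) < 2 := by
    have h := Real.rpow_lt_rpow_of_exponent_lt (by norm_num : (1:ℝ) < 2)
      (show 2*α < 1 by linarith)
    rwa [Real.rpow_one] at h
  have hq1' : (2:ℝ)^(2*α) - 1 ≠ 0 := sub_ne_zero.mpr hq1.ne'
  have hc1 : (1:ℝ) < (2:ℝ)^(s+1) := by
    have h := Real.rpow_lt_rpow_of_exponent_lt (by norm_num : (1:ℝ) < 2)
      (show (0:ℝ) < s+1 by linarith)
    rwa [Real.rpow_zero] at h
  have hc0 : (0:ℝ) < (2:ℝ)^(s+1) - 1 := by linarith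
  set E : ℝ := (2:ℝ)^(s*((p+2:ℕ):ℝ)) with hEdef
  have hE : 0 < E := Real.rpow_pos_of_pos (by norm_num) _
  -- basic facts about b and B
  have hbB : (a (p+2) - a (p+1)) * E ≤ B := by
    have h := hB (p+2) (by omega)
    rw [hk1] at h
    exact h
  have hB0 : 0 < B := lt_of_lt_of_le hpos hbB
  -- tail bound
  have hSlb := S_lb a Ca B s hs hCa hB (p+2)
  have hTlb : -(S a (p+2) * E) ≤ 2*B/((2:ℝ)^(s+1)-1) := by
    have h := mul_le_mul_of_nonneg_right hSlb hE.le
    calc -(S a (p+2) * E) = -(S a (p+2)) * E := by ring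
    _ ≤ B * E⁻¹ * (2/((2:ℝ)^(s+1)-1)) * E := h
    _ = 2*B/((2:ℝ)^(s+1)-1) := by field_simp [hE.ne']
  have hSrec : S a (p+1) = (a (p+1) - a (p+2)) + S a (p+2) / 2 := S_rec a Ca hCa (p+1)
  -- first-sum difference
  have hsum : (∑ n ∈ Finset.range (p+2), (a (p+2) - a n) * ((2:ℝ)^(2*α))^n)
      - (∑ n ∈ Finset.range (p+1), (a (p+1) - a n) * ((2:ℝ)^(2*α))^n)
      = (a (p+2) - a (p+1)) * ((((2:ℝ)^(2*α))^(p+2) - 1)/((2:ℝ)^(2*α)-1)) := by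
    have h2 : ∑ n ∈ Finset.range (p+1), (a (p+2) - a n) * ((2:ℝ)^(2*α))^n
        = ∑ n ∈ Finset.range (p+1), ((a (p+1) - a n) * ((2:ℝ)^(2*α))^n
            + (a (p+2) - a (p+1)) * ((2:ℝ)^(2*α))^n) :=
      Finset.sum_congr rfl (fun n _ => by ring)
    rw [Finset.sum_range_succ, h2, Finset.sum_add_distrib, ← Finset.mul_sum,
      geom_sum_eq hq1.ne' (p+1)]
    field_simp
    ring
  -- Ldiss difference
  have hdiff : Ldiss α a (p+2) - Ldiss α a (p+1)
      = (a (p+2) - a (p+1)) * ((((2:ℝ)^(2*α))^(p+2) - 1)/((2:ℝ)^(2*α)-1))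
        + ((2:ℝ)^(2*α))^(p+1) * (a (p+2) - a (p+1))
        + ((2:ℝ)^(2*α))^(p+1) * ((2:ℝ)^(2*α) - 1/2) * S a (p+2) := by
    rw [Ldiss_eq α a (p+2), Ldiss_eq α a (p+1), hSrec]
    linear_combination hsum
  -- geometric identity
  have hG : ((((2:ℝ)^(2*α))^(p+2) - 1)/((2:ℝ)^(2*α)-1))
      = ((((2:ℝ)^(2*α))^(p+1) - 1)/((2:ℝ)^(2*α)-1)) + ((2:ℝ)^(2*α))^(p+1) := by
    field_simp
    ring
  -- constant in hkbig
  have hc : (3:ℝ)/4 * ((2:ℝ)^s - 1)⁻¹ * (1 - 1/((2:ℝ)^(s+1) - 1))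
      = 3/(2*((2:ℝ)^(s+1)-1)) := by
    have hx1 : (1:ℝ) < (2:ℝ)^s := by
      have h := Real.rpow_lt_rpow_of_exponent_lt (by norm_num : (1:ℝ) < 2) hs
      rwa [Real.rpow_zero] at h
    have hx2 : (2:ℝ)^(s+1) = (2:ℝ)^s * 2 := by
      rw [Real.rpow_add (by norm_num), Real.rpow_one]
    rw [hx2]
    have h3 : (2:ℝ)^s - 1 ≠ 0 := sub_ne_zero.mpr hx1.ne'
    have h4 : (2:ℝ)^s * 2 - 1 ≠ 0 := by intro h; nlinarith
    field_simp
    ring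
  rw [hc] at hkbig
  -- cast in goal
  have hcast : (2:ℝ)^(2*α*(((p+2:ℕ):ℝ) - 1)) = ((2:ℝ)^(2*α))^(p+1) := by
    rw [show ((((p+2:ℕ):ℝ)) - 1) = (((p+1:ℕ):ℝ)) by push_cast; ring, hq_pow]
  rw [hcast, hdiff]
  -- final estimate
  have hP : (0:ℝ) < ((2:ℝ)^(2*α))^(p+1) := by positivity
  have h7 : -(((2:ℝ)^(2*α) - 1/2) * (S a (p+2) * E)) ≤ 3*(B/((2:ℝ)^(s+1)-1)) := by
    have l1 : ((2:ℝ)^(2*α) - 1/2) * (-(S a (p+2) * E))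
        ≤ ((2:ℝ)^(2*α) - 1/2) * (2*B/((2:ℝ)^(s+1)-1)) :=
      mul_le_mul_of_nonneg_left hTlb (by linarith)
    have l2 : ((2:ℝ)^(2*α) - 1/2) * (2*B/((2:ℝ)^(s+1)-1))
        ≤ (3/2) * (2*B/((2:ℝ)^(s+1)-1)) :=
      mul_le_mul_of_nonneg_right (by linarith)
        (div_nonneg (by linarith) hc0.le)
    calc -(((2:ℝ)^(2*α) - 1/2) * (S a (p+2) * E))
        = ((2:ℝ)^(2*α) - 1/2) * (-(S a (p+2) * E)) := by ring
    _ ≤ ((2:ℝ)^(2*α) - 1/2) * (2*B/((2:ℝ)^(s+1)-1)) := l1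
    _ ≤ (3/2) * (2*B/((2:ℝ)^(s+1)-1)) := l2
    _ = 3*(B/((2:ℝ)^(s+1)-1)) := by ring
  have h9 : 0 ≤ 2*((a (p+2) - a (p+1))*E) + ((2:ℝ)^(2*α) - 1/2) * (S a (p+2) * E) := by
    have he : 3*(B/((2:ℝ)^(s+1)-1)) = 2*(3/(2*((2:ℝ)^(s+1)-1))*B) := by
      field_simp [hc0.ne']
    linarith
  have hkey : 0 ≤ ((2:ℝ)^(2*α))^(p+1)
      * (2*((a (p+2) - a (p+1))*E) + ((2:ℝ)^(2*α) - 1/2) * (S a (p+2) * E)) :=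
    mul_nonneg hP.le h9
  have hGoal : ((a (p+2) - a (p+1)) * ((((2:ℝ)^(2*α))^(p+2) - 1)/((2:ℝ)^(2*α)-1))
        + ((2:ℝ)^(2*α))^(p+1) * (a (p+2) - a (p+1))
        + ((2:ℝ)^(2*α))^(p+1) * ((2:ℝ)^(2*α) - 1/2) * S a (p+2)) * E
      - ((((2:ℝ)^(2*α))^(p+1) - 1)/((2:ℝ)^(2*α)-1)) * ((a (p+2) - a (p+1)) * E)
      = ((2:ℝ)^(2*α))^(p+1)
        * (2*((a (p+2) - a (p+1))*E) + ((2:ℝ)^(2*α) - 1/2) * (S a (p+2) * E)) := by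
    rw [hG]
    ring
  linarith [hkey, hGoal]
end

section
/- Let 0 < α < 1/2 and let a = (a_k) be a nondecreasing bounded sequence with a_k → a_∞. Then for the discrete dissipation operator, lim_{k→∞} (ℒ^α a)_k = Σ_{n=0}^∞ (a_∞ − a_n) 2^{2αn}, provided the right-hand side converges; in particular if a is not eventually constant this limit is strictly positive. -/
open Real Filter Finset Topology

lemma hasSum_two_rpow_neg_one_sub : HasSum (fun n : ℕ => (2:ℝ) ^ (-1 - (n:ℝ))) 1 := by
  convert hasSum_geometric_two' 1 using 1
  funext n
  rw [rpow_sub two_pos, rpow_neg_one, rpow_natCast]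
  ring

lemma abs_tsum_mul_two_rpow_neg_one_sub_le {f : ℕ → ℝ} {B : ℝ} (hf : ∀ n, |f n| ≤ B) :
    |∑' n : ℕ, f n * (2:ℝ) ^ (-1 - (n:ℝ))| ≤ B := by
  have hpos (n : ℕ) : 0 ≤ (2:ℝ) ^ (-1 - (n:ℝ)) := by positivity
  have hbound (n : ℕ) : ‖f n * (2:ℝ) ^ (-1 - (n:ℝ))‖ ≤ B * (2:ℝ) ^ (-1 - (n:ℝ)) := by
    rw [norm_mul, norm_of_nonneg (hpos n)]
    exact mul_le_mul_of_nonneg_right (hf n) (hpos n)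
  simpa using tsum_of_norm_bounded (hasSum_two_rpow_neg_one_sub.mul_left B) hbound

lemma abs_sub_le_of_abs_sub_mul_two_rpow_le {a : ℕ → ℝ} {L s C : ℝ} (hs : 0 < s)
    (hlim : Tendsto a atTop (𝓝 L))
    (hstep : ∀ k : ℕ, |a (k + 1) - a k| * (2:ℝ) ^ (s * ((k:ℝ) + 1)) ≤ C) (k : ℕ) :
    |a k - L| ≤ C * 2 ^ (-s) / (1 - 2 ^ (-s)) * ((2:ℝ) ^ (-s)) ^ k := by
  have hq : (2:ℝ) ^ (-s) < 1 := rpow_lt_one_of_one_lt_of_neg one_lt_two (neg_neg_of_pos hs)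
  have hdist (n : ℕ) : dist (a n) (a (n + 1)) ≤ C * 2 ^ (-s) * ((2:ℝ) ^ (-s)) ^ n := by
    have hpow : (2:ℝ) ^ (-s) * ((2:ℝ) ^ (-s)) ^ n = ((2:ℝ) ^ (s * ((n:ℝ) + 1)))⁻¹ := by
      rw [← rpow_natCast, ← rpow_mul zero_le_two, ← rpow_add two_pos, ← rpow_neg zero_le_two]
      ring_nf
    rw [dist_comm, Real.dist_eq, mul_assoc, hpow, ← div_eq_mul_inv, le_div_iff₀ (by positivity)]
    exact hstep n
  have := dist_le_of_le_geometric_of_tendsto _ _ hq hdist hlim k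
  rw [← Real.dist_eq]
  linarith [mul_div_right_comm (C * 2 ^ (-s)) (((2:ℝ) ^ (-s)) ^ k) (1 - 2 ^ (-s))]

lemma summable_sub_mul_two_rpow_of_abs_sub_le {α L D q : ℝ} {a : ℕ → ℝ} (hq0 : 0 ≤ q)
    (hq : (2:ℝ) ^ (2 * α) * q < 1) (ha : ∀ n, |a n - L| ≤ D * q ^ n) :
    Summable fun n : ℕ => (L - a n) * (2:ℝ) ^ (2 * α * (n:ℝ)) := by
  refine ((summable_geometric_of_lt_one (by positivity) hq).mul_left D).of_norm_bounded
    fun n => ?_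
  calc _ = |a n - L| * ((2:ℝ) ^ (2 * α)) ^ n := by
        rw [norm_mul, Real.norm_eq_abs, abs_sub_comm, norm_of_nonneg (by positivity),
          rpow_mul_natCast zero_le_two]
    _ ≤ D * q ^ n * ((2:ℝ) ^ (2 * α)) ^ n := mul_le_mul_of_nonneg_right (ha n) (by positivity)
    _ = D * ((2:ℝ) ^ (2 * α) * q) ^ n := by ring

lemma Ldiss_sub_sum_range (α L : ℝ) (a : ℕ → ℝ) (k : ℕ) :
    Ldiss α a k - ∑ n ∈ range k, (L - a n) * (2:ℝ) ^ (2 * α * (n:ℝ)) =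
      (a k - L) * ∑ n ∈ range k, (2:ℝ) ^ (2 * α * (n:ℝ)) +
        ∑' n : ℕ, (a k - a (k + 1 + n)) * (2:ℝ) ^ (2 * α * (k:ℝ)) * (2:ℝ) ^ (-1 - (n:ℝ)) := by
  rw [Ldiss, add_sub_right_comm, ← sum_sub_distrib, mul_sum]
  congr 1
  exact sum_congr rfl fun n _ => by ring

lemma abs_Ldiss_sub_sum_range_le {α L D q : ℝ} {a : ℕ → ℝ} (hα : 0 < α) (hq0 : 0 ≤ q)
    (hq1 : q ≤ 1) (ha : ∀ k, |a k - L| ≤ D * q ^ k) (k : ℕ) :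
    |Ldiss α a k - ∑ n ∈ range k, (L - a n) * (2:ℝ) ^ (2 * α * (n:ℝ))| ≤
      D * (((2:ℝ) ^ (2 * α) - 1)⁻¹ + 2) * ((2:ℝ) ^ (2 * α) * q) ^ k := by
  set R : ℝ := (2:ℝ) ^ (2 * α)
  have hR : 1 < R := one_lt_rpow one_lt_two (by positivity)
  have hRpow (n : ℕ) : (2:ℝ) ^ (2 * α * (n:ℝ)) = R ^ n := rpow_mul_natCast zero_le_two _ n
  have hD : 0 ≤ D := nonneg_of_mul_nonneg_left ((abs_nonneg _).trans (ha 0)) (by simp)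
  have hgeom : ∑ n ∈ range k, R ^ n ≤ R ^ k * (R - 1)⁻¹ := by
    rw [geom_sum_eq hR.ne', div_eq_mul_inv]
    exact mul_le_mul_of_nonneg_right (by linarith) (inv_nonneg.2 (by linarith))
  have hsum0 : 0 ≤ ∑ n ∈ range k, R ^ n := sum_nonneg fun n _ => pow_nonneg (by positivity) n
  have hnear : |(a k - L) * ∑ n ∈ range k, R ^ n| ≤ D * q ^ k * (R ^ k * (R - 1)⁻¹) := by
    rw [abs_mul, abs_of_nonneg hsum0]
    exact mul_le_mul (ha k) hgeom hsum0 (by positivity)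
  have hfar (n : ℕ) : |(a k - a (k + 1 + n)) * R ^ k| ≤ 2 * (D * q ^ k) * R ^ k := by
    have hqn : q ^ (k + 1 + n) ≤ q ^ k := pow_le_pow_of_le_one hq0 hq1 (by omega)
    have hRk : 0 ≤ R ^ k := pow_nonneg (by linarith) k
    rw [abs_mul, abs_of_nonneg hRk]
    refine mul_le_mul_of_nonneg_right ?_ hRk
    calc |a k - a (k + 1 + n)| ≤ |a k - L| + |a (k + 1 + n) - L| := by
          rw [abs_sub_comm (a (k + 1 + n))]; exact abs_sub_le _ _ _
      _ ≤ D * q ^ k + D * q ^ k :=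
        add_le_add (ha k) ((ha _).trans (mul_le_mul_of_nonneg_left hqn hD))
      _ = 2 * (D * q ^ k) := by ring
  rw [Ldiss_sub_sum_range]
  simp only [hRpow]
  calc _ ≤ _ := abs_add_le _ _
    _ ≤ D * q ^ k * (R ^ k * (R - 1)⁻¹) + 2 * (D * q ^ k) * R ^ k :=
        add_le_add hnear (abs_tsum_mul_two_rpow_neg_one_sub_le hfar)
    _ = _ := by rw [mul_pow]; ring

lemma Monotone.exists_lt_of_tendsto_of_not_eventually_const {a : ℕ → ℝ} {L : ℝ} (hmono : Monotone a)
    (hlim : Tendsto a atTop (𝓝 L)) (hnc : ¬ ∃ N : ℕ, ∀ k ≥ N, a k = a N) : ∃ n, a n < L := by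
  by_contra! h
  exact hnc ⟨0, fun k _ => le_antisymm ((hmono.ge_of_tendsto hlim k).trans (h 0)) (hmono k.zero_le)⟩

theorem stmt3_general (α : ℝ) (hα0 : 0 < α)
    (a : ℕ → ℝ) (hmono : Monotone a) (aInf : ℝ)
    (hlim : Filter.Tendsto a Filter.atTop (nhds aInf))
    (s : ℝ) (hs2 : 2 * α < s) (C : ℝ)
    (hXs : ∀ k : ℕ, |a (k+1) - a k| * (2:ℝ) ^ (s * ((k:ℝ)+1)) ≤ C) :
    Filter.Tendsto (fun k => Ldiss α a k) Filter.atTop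
      (nhds (∑' n : ℕ, (aInf - a n) * (2:ℝ) ^ (2 * α * (n:ℝ)))) ∧
    ((¬ ∃ N : ℕ, ∀ k ≥ N, a k = a N) →
      0 < ∑' n : ℕ, (aInf - a n) * (2:ℝ) ^ (2 * α * (n:ℝ))) := by
  set q : ℝ := (2:ℝ) ^ (-s)
  set R : ℝ := (2:ℝ) ^ (2 * α)
  have hq0 : 0 ≤ q := by positivity
  have hq1 : q < 1 := rpow_lt_one_of_one_lt_of_neg one_lt_two (by linarith)
  have hRq : R * q < 1 := by
    rw [← rpow_add two_pos]
    exact rpow_lt_one_of_one_lt_of_neg one_lt_two (by linarith)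
  set D := C * q / (1 - q)
  have htail : ∀ k, |a k - aInf| ≤ D * q ^ k :=
    abs_sub_le_of_abs_sub_mul_two_rpow_le (by linarith) hlim hXs
  have hsum := summable_sub_mul_two_rpow_of_abs_sub_le hq0 hRq htail
  have hdiff : Tendsto (fun k => Ldiss α a k -
      ∑ n ∈ range k, (aInf - a n) * (2:ℝ) ^ (2 * α * (n:ℝ))) atTop (𝓝 0) := by
    refine squeeze_zero_norm (abs_Ldiss_sub_sum_range_le hα0 hq0 hq1.le htail) ?_
    simpa using (tendsto_pow_atTop_nhds_zero_of_lt_one (by positivity) hRq).const_mul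
      (D * ((R - 1)⁻¹ + 2))
  refine ⟨by simpa using hdiff.add hsum.hasSum.tendsto_sum_nat, fun hnc => ?_⟩
  obtain ⟨n, hn⟩ := hmono.exists_lt_of_tendsto_of_not_eventually_const hlim hnc
  exact hsum.tsum_pos (fun i => mul_nonneg (sub_nonneg.2 (hmono.ge_of_tendsto hlim i))
    (by positivity)) n (mul_pos (sub_pos.2 hn) (by positivity))

theorem stmt3 (α : ℝ) (hα0 : 0 < α) (hα1 : α < 1/2)
    (a : ℕ → ℝ) (hmono : Monotone a) (aInf : ℝ)
    (hlim : Filter.Tendsto a Filter.atTop (nhds aInf))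
    (s : ℝ) (hs1 : 1 < s) (hs2 : 2 * α < s) (C : ℝ)
    (hXs : ∀ k : ℕ, |a (k+1) - a k| * (2:ℝ) ^ (s * ((k:ℝ)+1)) ≤ C)
    (hconv : Summable (fun n : ℕ => (aInf - a n) * (2:ℝ) ^ (2 * α * (n:ℝ)))) :
    Filter.Tendsto (fun k => Ldiss α a k) Filter.atTop
      (nhds (∑' n : ℕ, (aInf - a n) * (2:ℝ) ^ (2 * α * (n:ℝ)))) ∧
    ((¬ ∃ N : ℕ, ∀ k ≥ N, a k = a N) →
      0 < ∑' n : ℕ, (aInf - a n) * (2:ℝ) ^ (2 * α * (n:ℝ))) :=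
  stmt3_general α hα0 a hmono aInf hlim s hs2 C hXs
end

section
/- Let 0 < δ < 1 and choose c > 0 with (c+1)^{−2} 2^{δ+1} > 1. Suppose (a_k)_{k≥0} is a nondecreasing real sequence with limit a < ∞. Then there exists a constant C₀(δ) > 0, depending only on δ (and the fixed c), such that Σ_{k=1}^∞ (a_k − a_{k-1})² 2^{k(δ+1)} ≥ C₀(δ) Σ_{k=1}^∞ (a − a_k)² 2^{k(δ+1)} (where the inequality is interpreted as holding trivially if both sides are +∞, and the left side is infinite whenever the right side is). -/
/-!
Write `d i = a (i+1) - a i ≥ 0`, so that `A - a k = ∑_{i ≥ k} d i`. With `t = 2^((δ+1)/2) > 1`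
the claim is a discrete Hardy inequality for tail sums with the geometric weight `t^(2k)`.
Weighted Cauchy–Schwarz gives `(∑_{i ≥ k} d i)² ≤ (∑_{i ≥ k} d i² t^i) · t^(-k) / (1 - t⁻¹)`;
multiplying by `t^(2k)`, summing over `k` and exchanging the order of summation leaves
`∑_{k ≤ i} t^k ≤ t^i / (1 - t⁻¹)` in front of `d i² t^i`, so `C₀ = (1 - t⁻¹)²` works.
-/

open ENNReal Filter Finset Topology

namespace ENNReal

variable {α : Type*}

theorem tsum_mul_sq_le (f g : α → ℝ≥0∞) :
    (∑' i, f i * g i) ^ 2 ≤ (∑' i, f i ^ 2) * ∑' i, g i ^ 2 := by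
  let _ : MeasurableSpace α := ⊤
  have h := lintegral_mul_le_Lp_mul_Lq MeasureTheory.Measure.count
    Real.HolderConjugate.two_two (measurable_from_top (f := f)).aemeasurable
    (measurable_from_top (f := g)).aemeasurable
  simp only [MeasureTheory.lintegral_count, Pi.mul_apply, rpow_two] at h
  calc (∑' i, f i * g i) ^ 2
      ≤ ((∑' i, f i ^ 2) ^ (1 / 2 : ℝ) * (∑' i, g i ^ 2) ^ (1 / 2 : ℝ)) ^ 2 := by gcongr
    _ = (∑' i, f i ^ 2) * ∑' i, g i ^ 2 := by
      rw [mul_pow, ← rpow_two, ← rpow_two, ← rpow_mul, ← rpow_mul]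
      norm_num

theorem tsum_sq_le_tsum_sq_mul_mul_tsum_inv (x w : α → ℝ≥0∞) (hw₀ : ∀ i, w i ≠ 0)
    (hw : ∀ i, w i ≠ ⊤) :
    (∑' i, x i) ^ 2 ≤ (∑' i, x i ^ 2 * w i) * ∑' i, (w i)⁻¹ := by
  set r : α → ℝ≥0∞ := fun i ↦ w i ^ (2⁻¹ : ℝ)
  have hr : ∀ i, r i ^ 2 = w i := fun i ↦ by
    simpa using rpow_inv_natCast_pow two_ne_zero (w i)
  have hr₀ : ∀ i, r i ≠ 0 := fun i ↦ (rpow_pos (pos_iff_ne_zero.2 (hw₀ i)) (hw i)).ne'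
  have hr_top : ∀ i, r i ≠ ⊤ := fun i ↦ rpow_ne_top_of_nonneg (by norm_num) (hw i)
  have hx : ∀ i, x i = x i * r i * (r i)⁻¹ := fun i ↦ by
    rw [mul_assoc, ENNReal.mul_inv_cancel (hr₀ i) (hr_top i), mul_one]
  calc (∑' i, x i) ^ 2 = (∑' i, x i * r i * (r i)⁻¹) ^ 2 := by simp only [← hx]
    _ ≤ (∑' i, (x i * r i) ^ 2) * ∑' i, (r i)⁻¹ ^ 2 := tsum_mul_sq_le _ _
    _ = (∑' i, x i ^ 2 * w i) * ∑' i, (w i)⁻¹ := by simp only [mul_pow, ← ENNReal.inv_pow, hr]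

theorem tsum_tsum_add_eq_tsum_sum_range (f : ℕ → ℕ → ℝ≥0∞) :
    ∑' k, ∑' n, f k (k + n) = ∑' i, ∑ k ∈ range (i + 1), f k i := by
  have hshift (k : ℕ) : ∑' n, f k (k + n) = ∑' i, if k ≤ i then f k i else 0 := by
    rw [← (add_right_injective k).tsum_eq (f := fun i ↦ if k ≤ i then f k i else 0)]
    · simp
    · intro i hi
      exact ⟨i - k, by grind [Function.mem_support]⟩
  simp_rw [hshift]
  rw [ENNReal.tsum_comm]
  refine tsum_congr fun i ↦ (tsum_eq_sum fun k hk ↦ ?_).trans (sum_congr rfl fun k hk ↦ ?_)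
  all_goals grind

variable {t : ℝ≥0∞}

theorem sum_range_pow_le (ht₀ : t ≠ 0) (ht : t ≠ ⊤) (i : ℕ) :
    ∑ k ∈ range (i + 1), t ^ k ≤ (1 - t⁻¹)⁻¹ * t ^ i := by
  rw [← sum_range_reflect, ← tsum_geometric, ← ENNReal.tsum_mul_right]
  refine (sum_congr rfl fun k hk ↦ ?_).trans_le (ENNReal.sum_le_tsum _)
  obtain ⟨m, rfl⟩ : ∃ m, i = k + m := ⟨i - k, by grind⟩
  rw [show k + m + 1 - 1 - k = m by omega, pow_add, ← mul_assoc, ← mul_pow,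
    ENNReal.inv_mul_cancel ht₀ ht, one_pow, one_mul]

theorem tsum_tail_sq_mul_pow_le (ht₀ : t ≠ 0) (ht : t ≠ ⊤) (d : ℕ → ℝ≥0∞) (k : ℕ) :
    (∑' n, d (k + n)) ^ 2 * t ^ (2 * k)
      ≤ (1 - t⁻¹)⁻¹ * ∑' n, t ^ k * (d (k + n) ^ 2 * t ^ (k + n)) := by
  have hgeom : ∑' n, (t ^ (k + n))⁻¹ = t⁻¹ ^ k * (1 - t⁻¹)⁻¹ := by
    simp_rw [ENNReal.inv_pow, pow_add, ENNReal.tsum_mul_left, tsum_geometric]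
  have hcancel : t⁻¹ ^ k * t ^ k = 1 := by
    rw [← mul_pow, ENNReal.inv_mul_cancel ht₀ ht, one_pow]
  calc (∑' n, d (k + n)) ^ 2 * t ^ (2 * k)
      ≤ (∑' n, d (k + n) ^ 2 * t ^ (k + n)) * (t⁻¹ ^ k * (1 - t⁻¹)⁻¹) * t ^ (2 * k) := by
        rw [← hgeom]
        gcongr
        exact tsum_sq_le_tsum_sq_mul_mul_tsum_inv _ _ (fun _ ↦ pow_ne_zero _ ht₀)
          (fun _ ↦ pow_ne_top ht)
    _ = (1 - t⁻¹)⁻¹ * (t ^ k * ∑' n, d (k + n) ^ 2 * t ^ (k + n)) * (t⁻¹ ^ k * t ^ k) := by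
        ring
    _ = (1 - t⁻¹)⁻¹ * ∑' n, t ^ k * (d (k + n) ^ 2 * t ^ (k + n)) := by
        rw [hcancel, mul_one, ENNReal.tsum_mul_left]

theorem hardy_inequality_tail (ht : 1 < t) (ht_top : t ≠ ⊤) (d : ℕ → ℝ≥0∞) :
    (1 - t⁻¹) ^ 2 * ∑' k, (∑' n, d (k + n)) ^ 2 * t ^ (2 * k) ≤ ∑' k, d k ^ 2 * t ^ (2 * k) := by
  set C := 1 - t⁻¹
  have hC₀ : C ≠ 0 := (tsub_pos_of_lt (ENNReal.inv_lt_one.2 ht)).ne'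
  have hC : C ≠ ⊤ := sub_ne_top one_ne_top
  have ht₀ : t ≠ 0 := (zero_lt_one.trans ht).ne'
  calc C ^ 2 * ∑' k, (∑' n, d (k + n)) ^ 2 * t ^ (2 * k)
      ≤ C ^ 2 * ∑' k, C⁻¹ * ∑' n, t ^ k * (d (k + n) ^ 2 * t ^ (k + n)) := by
        gcongr _ * ?_
        exact ENNReal.tsum_le_tsum fun k ↦ tsum_tail_sq_mul_pow_le ht₀ ht_top d k
    _ = C ^ 2 * C⁻¹ * ∑' i, ∑ k ∈ range (i + 1), t ^ k * (d i ^ 2 * t ^ i) := by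
        rw [ENNReal.tsum_mul_left, mul_assoc,
          tsum_tsum_add_eq_tsum_sum_range fun k i ↦ t ^ k * (d i ^ 2 * t ^ i)]
    _ ≤ C ^ 2 * C⁻¹ * ∑' i, C⁻¹ * t ^ i * (d i ^ 2 * t ^ i) := by
        simp_rw [← sum_mul]
        gcongr
        exact sum_range_pow_le ht₀ ht_top _
    _ = C ^ 2 * C⁻¹ * (C⁻¹ * ∑' i, d i ^ 2 * t ^ (2 * i)) := by
        rw [← ENNReal.tsum_mul_left (a := C⁻¹)]
        exact congrArg _ (tsum_congr fun i ↦ by ring)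
    _ = ∑' k, d k ^ 2 * t ^ (2 * k) := by
        rw [← mul_assoc, sq, mul_assoc C, ENNReal.mul_inv_cancel hC₀ hC, mul_one,
          ENNReal.mul_inv_cancel hC₀ hC, one_mul]

end ENNReal

theorem Monotone.ofReal_sub_eq_tsum {a : ℕ → ℝ} (ha : Monotone a) {A : ℝ}
    (hA : Tendsto a atTop (𝓝 A)) (j : ℕ) :
    ENNReal.ofReal (A - a j) = ∑' n, ENNReal.ofReal (a (j + n + 1) - a (j + n)) := by
  refine tendsto_nhds_unique ?_ (ENNReal.tendsto_nat_tsum _)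
  have hpartial (N : ℕ) : ∑ n ∈ range N, ENNReal.ofReal (a (j + n + 1) - a (j + n))
      = ENNReal.ofReal (a (j + N) - a j) := by
    rw [← ENNReal.ofReal_sum_of_nonneg fun n _ ↦ sub_nonneg.2 (ha (Nat.le_succ _))]
    exact congrArg _ (sum_range_sub (fun n ↦ a (j + n)) N)
  simp_rw [hpartial]
  refine ENNReal.tendsto_ofReal (Tendsto.sub_const ?_ _)
  exact hA.comp (tendsto_atTop_atTop_of_monotone (fun _ _ h ↦ by omega) fun n ↦ ⟨n, by omega⟩)

theorem ofReal_sq_mul_two_rpow {x : ℝ} (hx : 0 ≤ x) (δ : ℝ) (k : ℕ) :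
    ENNReal.ofReal (x ^ 2 * (2:ℝ) ^ (((k:ℝ) + 1) * (δ + 1)))
      = ENNReal.ofReal x ^ 2 * ENNReal.ofReal (2 ^ ((δ + 1) / 2)) ^ (2 * (k + 1)) := by
  rw [ENNReal.ofReal_mul (sq_nonneg x), ENNReal.ofReal_pow hx,
    ← ENNReal.ofReal_pow (by positivity : (0:ℝ) ≤ 2 ^ ((δ + 1) / 2)),
    ← Real.rpow_mul_natCast zero_le_two]
  push_cast
  ring_nf

theorem stmt4_general (δ : ℝ) (hδ0 : 0 < δ) :
    ∃ C₀ : ℝ, 0 < C₀ ∧ ∀ (a : ℕ → ℝ) (A : ℝ), Monotone a →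
      Filter.Tendsto a Filter.atTop (nhds A) →
      ENNReal.ofReal C₀ *
          ∑' k : ℕ, ENNReal.ofReal ((A - a (k+1))^2 * (2:ℝ)^(((k:ℝ)+1)*(δ+1)))
        ≤ ∑' k : ℕ, ENNReal.ofReal ((a (k+1) - a k)^2 * (2:ℝ)^(((k:ℝ)+1)*(δ+1))) := by
  set t := ENNReal.ofReal (2 ^ ((δ + 1) / 2))
  have ht : 1 < t := ENNReal.one_lt_ofReal.2 (Real.one_lt_rpow (by norm_num) (by linarith))
  have hC₀ : (1 - t⁻¹) ^ 2 ≠ 0 := pow_ne_zero _ (tsub_pos_of_lt (ENNReal.inv_lt_one.2 ht)).ne'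
  have hC : (1 - t⁻¹) ^ 2 ≠ ⊤ := pow_ne_top (sub_ne_top one_ne_top)
  refine ⟨((1 - t⁻¹) ^ 2).toReal, ENNReal.toReal_pos hC₀ hC, fun a A ha hA ↦ ?_⟩
  set d : ℕ → ℝ≥0∞ := fun i ↦ ENNReal.ofReal (a (i + 1) - a i)
  rw [ENNReal.ofReal_toReal hC,
    tsum_congr fun k ↦ ofReal_sq_mul_two_rpow (sub_nonneg.2 (ha.ge_of_tendsto hA _)) δ k,
    tsum_congr fun k ↦ ofReal_sq_mul_two_rpow (sub_nonneg.2 (ha (Nat.le_succ k))) δ k]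
  simp_rw [ha.ofReal_sub_eq_tsum hA]
  calc (1 - t⁻¹) ^ 2 * ∑' k, (∑' n, d (k + 1 + n)) ^ 2 * t ^ (2 * (k + 1))
      ≤ (1 - t⁻¹) ^ 2 * ∑' k, (∑' n, d (k + n)) ^ 2 * t ^ (2 * k) := by
        gcongr _ * ?_
        exact ENNReal.tsum_comp_le_tsum_of_injective (add_left_injective 1)
          fun k ↦ (∑' n, d (k + n)) ^ 2 * t ^ (2 * k)
    _ ≤ ∑' k, d k ^ 2 * t ^ (2 * k) := ENNReal.hardy_inequality_tail ht ofReal_ne_top d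
    _ ≤ ∑' k, d k ^ 2 * t ^ (2 * (k + 1)) := by
        gcongr with k
        exacts [ht.le, by omega]

/-- The good/bad index lemma: for nondecreasing sequences with limit `A`,
`Σ (a_k - a_{k-1})² 2^{k(δ+1)} ≥ C₀(δ) Σ (A - a_k)² 2^{k(δ+1)}`, the inequality being
interpreted in `ℝ≥0∞` so that it holds trivially when both sides are infinite. -/
theorem stmt4 (δ c : ℝ) (hδ0 : 0 < δ) (hδ1 : δ < 1) (hc : 0 < c)
    (hcδ : 1 < (c+1)⁻¹^2 * (2:ℝ)^(δ+1)) :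
    ∃ C₀ : ℝ, 0 < C₀ ∧ ∀ (a : ℕ → ℝ) (A : ℝ), Monotone a →
      Filter.Tendsto a Filter.atTop (nhds A) →
      ENNReal.ofReal C₀ *
          ∑' k : ℕ, ENNReal.ofReal ((A - a (k+1))^2 * (2:ℝ)^(((k:ℝ)+1)*(δ+1)))
        ≤ ∑' k : ℕ, ENNReal.ofReal ((a (k+1) - a k)^2 * (2:ℝ)^(((k:ℝ)+1)*(δ+1))) :=
  stmt4_general δ hδ0
end

section
/- Let (a_k)_{k≥0} be nondecreasing with limit a, let 0 < δ < 1, and suppose there exists K such that for all k > K, a_k − a_{k-1} ≤ c(a − a_k), where c > 0 satisfies (c+1)^{−2} 2^{δ+1} > 1 and a > a_K. Then Σ_{k=1}^∞ (a − a_k)² 2^{k(δ+1)} = +∞. -/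
/-! If `A - a_{k-1} ≤ (c+1)(A - a_k)` for `k > K`, the gap `A - a_k` decays at most geometrically
with ratio `(c+1)⁻¹`, so the `k`-th term of the series is at least its `K`-th term times
`((c+1)⁻¹² 2^{δ+1})^{k-K} ≥ 1`. The terms are thus bounded below by a positive constant. -/

open Filter

lemma le_pow_mul_of_le_mul_succ {d : ℕ → ℝ} {q : ℝ} (hq : 0 ≤ q)
    (hstep : ∀ n, d n ≤ q * d (n + 1)) (n : ℕ) : d 0 ≤ q ^ n * d n := by
  induction n with
  | zero => simp
  | succ n ih =>
    calc d 0 ≤ q ^ n * d n := ih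
      _ ≤ q ^ n * (q * d (n + 1)) := mul_le_mul_of_nonneg_left (hstep n) (pow_nonneg hq n)
      _ = q ^ (n + 1) * d (n + 1) := by ring

lemma Real.rpow_natCast_add_mul {x : ℝ} (hx : 0 < x) (K n : ℕ) (s : ℝ) :
    x ^ (((K + n : ℕ) : ℝ) * s) = x ^ ((K : ℝ) * s) * (x ^ s) ^ n := by
  rw [← Real.rpow_mul_natCast hx.le, ← Real.rpow_add hx]
  push_cast
  ring_nf

lemma ENNReal.tsum_ofReal_eq_top_of_eventually_le {f : ℕ → ℝ} {C : ℝ} (hC : 0 < C)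
    (hf : ∀ᶠ k in atTop, C ≤ f k) : ∑' k, ENNReal.ofReal (f k) = ⊤ := by
  by_contra hsum
  have hsmall : ∀ᶠ k in atTop, ENNReal.ofReal (f k) < ENNReal.ofReal C :=
    (ENNReal.tendsto_atTop_zero_of_tsum_ne_top hsum).eventually_lt_const
      (ENNReal.ofReal_pos.mpr hC)
  obtain ⟨k, hlt, hle⟩ := (hsmall.and hf).exists
  exact (ENNReal.ofReal_le_ofReal hle).not_gt hlt

theorem stmt5_general (δ c : ℝ) (hc : 0 < c)
    (hcδ : 1 < (c+1)⁻¹^2 * (2:ℝ)^(δ+1))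
    (a : ℕ → ℝ) (A : ℝ)
    (K : ℕ) (hbad : ∀ k : ℕ, K < k → a k - a (k-1) ≤ c * (A - a k))
    (hK : a K < A) :
    ∑' k : ℕ, ENNReal.ofReal ((A - a k)^2 * (2:ℝ)^((k:ℝ)*(δ+1))) = ⊤ := by
  have hc1 : 0 < c + 1 := by linarith
  have hstep : ∀ n, A - a (K + n) ≤ (c + 1) * (A - a (K + (n + 1))) := fun n => by
    have := hbad (K + (n + 1)) (by omega)
    rw [show K + (n + 1) - 1 = K + n by omega] at this
    linarith
  have hgap (n : ℕ) : (c + 1)⁻¹ ^ n * (A - a K) ≤ A - a (K + n) := by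
    rw [inv_pow, inv_mul_le_iff₀ (pow_pos hc1 n)]
    exact le_pow_mul_of_le_mul_succ hc1.le hstep n
  refine ENNReal.tsum_ofReal_eq_top_of_eventually_le
    (C := (A - a K) ^ 2 * (2:ℝ) ^ ((K:ℝ) * (δ + 1))) (by positivity) ?_
  filter_upwards [eventually_ge_atTop K] with k hk
  obtain ⟨n, rfl⟩ := Nat.exists_eq_add_of_le hk
  calc (A - a K) ^ 2 * (2:ℝ) ^ ((K:ℝ) * (δ + 1))
      ≤ (A - a K) ^ 2 * (2:ℝ) ^ ((K:ℝ) * (δ + 1)) * ((c + 1)⁻¹ ^ 2 * (2:ℝ) ^ (δ + 1)) ^ n :=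
        le_mul_of_one_le_right (by positivity) (one_le_pow₀ hcδ.le)
    _ = ((c + 1)⁻¹ ^ n * (A - a K)) ^ 2 * (2:ℝ) ^ (((K + n : ℕ) : ℝ) * (δ + 1)) := by
        rw [Real.rpow_natCast_add_mul two_pos]; ring
    _ ≤ (A - a (K + n)) ^ 2 * (2:ℝ) ^ (((K + n : ℕ) : ℝ) * (δ + 1)) := by
        have hAK : 0 < A - a K := sub_pos.mpr hK
        gcongr
        exact hgap n

/-- The "all large indices are bad" case: if `a_k - a_{k-1} ≤ c (A - a_k)` for all
`k > K` and `a_K < A`, then `Σ (A - a_k)² 2^{k(δ+1)} = ∞`. -/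
theorem stmt5 (δ c : ℝ) (hδ0 : 0 < δ) (hδ1 : δ < 1) (hc : 0 < c)
    (hcδ : 1 < (c+1)⁻¹^2 * (2:ℝ)^(δ+1))
    (a : ℕ → ℝ) (A : ℝ) (hmono : Monotone a)
    (hlim : Filter.Tendsto a Filter.atTop (nhds A))
    (K : ℕ) (hbad : ∀ k : ℕ, K < k → a k - a (k-1) ≤ c * (A - a k))
    (hK : a K < A) :
    ∑' k : ℕ, ENNReal.ofReal ((A - a k)^2 * (2:ℝ)^((k:ℝ)*(δ+1))) = ⊤ :=
  stmt5_general δ c hc hcδ a A K hbad hK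
end

section
/- Consider the inviscid discrete system b_k'(t) = −b_k(t)² + 2 b_{k-1}(t)² for k ≥ 1 with b_0 ≡ 0, with continuous nonnegative solutions on [T₁, T₂]. Fix k ≥ 2. If b_{k-1}(t) < √2 · b_{k-2}(t) for all t ∈ [T₁, T₂] and b_k(T₁) < √2 · b_{k-1}(T₁), then b_k(t) < √2 · b_{k-1}(t) for all t ∈ [T₁, T₂]. -/
/-!
Put `g = √2 b_{k-1} - b_k`, positive at `T₁`. At a zero of `g` we have `b_k = √2 b_{k-1}`, so the
`b_k²` and `b_{k-1}²` terms of `g'` cancel and `g' = √2 (2 b_{k-2}² - b_{k-1}²) > 0` by the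
hypothesis on `b_{k-1}`. A function whose derivative is positive at each of its zeros cannot
reach `0` from above, so `g` stays positive.
-/

open Set

theorem pos_of_hasDerivWithinAt_Iic_pos_of_eq_zero {f f' : ℝ → ℝ} {a b : ℝ}
    (hf : ContinuousOn f (Icc a b)) (hf' : ∀ t ∈ Ioc a b, HasDerivWithinAt f (f' t) (Iic t) t)
    (ha : 0 < f a) (hzero : ∀ t ∈ Ioc a b, f t = 0 → 0 < f' t) :
    ∀ t ∈ Icc a b, 0 < f t := by
  intro t ht
  by_contra! hft
  -- Reflected in time, `f` starts `≤ 0` at `-t` and can only cross `0` downwards, so it is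
  -- still `≤ 0` at `-a`.
  have hneg_Icc : MapsTo Neg.neg (Icc (-t) (-a)) (Icc a b) := fun s hs =>
    ⟨le_neg_of_le_neg hs.2, (neg_le.1 hs.1).trans ht.2⟩
  have hneg_Ico : ∀ s ∈ Ico (-t) (-a), -s ∈ Ioc a b := fun s hs =>
    ⟨lt_neg_of_lt_neg hs.2, (neg_le.1 hs.1).trans ht.2⟩
  have hreflect_deriv : ∀ s ∈ Ico (-t) (-a),
      HasDerivWithinAt (fun s => f (-s)) (-f' (-s)) (Ici s) s := fun s hs => by
    simpa [Function.comp_def] using (hf' (-s) (hneg_Ico s hs)).comp s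
      (hasDerivWithinAt_neg s (Ici s)) fun _ hu => neg_le_neg (mem_Ici.1 hu)
  have hfa := image_le_of_deriv_right_lt_deriv_boundary (B := fun _ => 0) (B' := fun _ => 0)
    (hf.comp continuousOn_neg hneg_Icc) hreflect_deriv (by simpa using hft)
    (fun _ => hasDerivAt_const _ _)
    (fun s hs hs0 => neg_neg_of_pos (hzero (-s) (hneg_Ico s hs) hs0))
    (x := -a) ⟨neg_le_neg ht.1, le_rfl⟩
  simp only [Function.comp_apply, neg_neg] at hfa
  exact hfa.not_gt ha

theorem sqrt_two_mul_sub_deriv_pos {u v w : ℝ} (hv : 0 ≤ v) (hvw : v < √2 * w)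
    (hu : u = √2 * v) : 0 < √2 * (-v ^ 2 + 2 * w ^ 2) - (-u ^ 2 + 2 * v ^ 2) := by
  have hsq : v ^ 2 < 2 * w ^ 2 :=
    calc v ^ 2 < (√2 * w) ^ 2 := pow_lt_pow_left₀ hvw hv two_ne_zero
      _ = 2 * w ^ 2 := by rw [mul_pow, Real.sq_sqrt zero_le_two]
  rw [hu, mul_pow, Real.sq_sqrt zero_le_two]
  linarith [mul_pos (Real.sqrt_pos.2 two_pos) (sub_pos.2 hsq)]

theorem stmt9_general (T₁ T₂ : ℝ) (b : ℕ → ℝ → ℝ)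
    (hderiv : ∀ j : ℕ, 1 ≤ j → ∀ t ∈ Set.Icc T₁ T₂,
      HasDerivAt (b j) (-(b j t)^2 + 2 * (b (j-1) t)^2) t)
    (hnonneg : ∀ j : ℕ, ∀ t ∈ Set.Icc T₁ T₂, 0 ≤ b j t)
    (k : ℕ) (hk : 2 ≤ k)
    (hlow : ∀ t ∈ Set.Icc T₁ T₂, b (k-1) t < Real.sqrt 2 * b (k-2) t)
    (hinit : b k T₁ < Real.sqrt 2 * b (k-1) T₁) :
    ∀ t ∈ Set.Icc T₁ T₂, b k t < Real.sqrt 2 * b (k-1) t := by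
  have hgap_deriv : ∀ t ∈ Icc T₁ T₂, HasDerivAt (fun t => √2 * b (k-1) t - b k t)
      (√2 * (-(b (k-1) t)^2 + 2 * (b (k-2) t)^2) - (-(b k t)^2 + 2 * (b (k-1) t)^2)) t := by
    intro t ht
    have hprev := hderiv (k-1) (by omega) t ht
    rw [show k - 1 - 1 = k - 2 by omega] at hprev
    exact (hprev.const_mul _).sub (hderiv k (by omega) t ht)
  have hgap_pos := pos_of_hasDerivWithinAt_Iic_pos_of_eq_zero
    (fun t ht => (hgap_deriv t ht).continuousAt.continuousWithinAt)
    (fun t ht => (hgap_deriv t (Ioc_subset_Icc_self ht)).hasDerivWithinAt)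
    (sub_pos.2 hinit)
    (fun t ht hzero => sqrt_two_mul_sub_deriv_pos (hnonneg _ t (Ioc_subset_Icc_self ht))
      (hlow t (Ioc_subset_Icc_self ht)) (sub_eq_zero.1 hzero).symm)
  exact fun t ht => sub_pos.1 (hgap_pos t ht)

/-- Comparison lemma for the inviscid discrete system `b_k' = −b_k² + 2 b_{k-1}²`:
if `b_{k-1} < √2 b_{k-2}` on `[T₁, T₂]` and `b_k(T₁) < √2 b_{k-1}(T₁)`, then
`b_k < √2 b_{k-1}` on all of `[T₁, T₂]`. -/
theorem stmt9 (T₁ T₂ : ℝ) (hT : T₁ ≤ T₂) (b : ℕ → ℝ → ℝ)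
    (hb0 : ∀ t ∈ Set.Icc T₁ T₂, b 0 t = 0)
    (hderiv : ∀ j : ℕ, 1 ≤ j → ∀ t ∈ Set.Icc T₁ T₂,
      HasDerivAt (b j) (-(b j t)^2 + 2 * (b (j-1) t)^2) t)
    (hnonneg : ∀ j : ℕ, ∀ t ∈ Set.Icc T₁ T₂, 0 ≤ b j t)
    (k : ℕ) (hk : 2 ≤ k)
    (hlow : ∀ t ∈ Set.Icc T₁ T₂, b (k-1) t < Real.sqrt 2 * b (k-2) t)
    (hinit : b k T₁ < Real.sqrt 2 * b (k-1) T₁) :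
    ∀ t ∈ Set.Icc T₁ T₂, b k t < Real.sqrt 2 * b (k-1) t :=
  stmt9_general T₁ T₂ b hderiv hnonneg k hk hlow hinit
end

section
/- Consider the inviscid discrete system b_k'(t) = −b_k(t)² + 2 b_{k-1}(t)² for k ≥ 1, b_0 ≡ 0, with C¹ nonnegative solutions on [T₁, T₂]. Fix k ≥ 2. If b_{k-1}(t) < b_{k-2}(t) for all t ∈ [T₁, T₂] and b_k(T₁) < b_{k-1}(T₁), then b_k(t) < b_{k-1}(t) for all t ∈ [T₁, T₂]. -/
open Set

/-- The fencing inequality keeps `f` nonnegative; a zero after `a` would then be a minimum of `f`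
on the interval to its left, where Fermat's rule forces the derivative to be nonpositive. -/
theorem pos_of_hasDerivAt_pos_of_eq_zero {f f' : ℝ → ℝ} {a b : ℝ}
    (hf : ∀ x ∈ Icc a b, HasDerivAt f (f' x) x) (ha : 0 < f a)
    (hzero : ∀ x ∈ Icc a b, f x = 0 → 0 < f' x) : ∀ x ∈ Icc a b, 0 < f x := by
  have hnonneg : ∀ x ∈ Icc a b, 0 ≤ f x :=
    image_le_of_deriv_right_lt_deriv_boundary' (f := fun _ => 0) (f' := fun _ => 0)
      continuousOn_const (fun _ _ => hasDerivWithinAt_const _ _ _) ha.le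
      (fun x hx => (hf x hx).continuousAt.continuousWithinAt)
      (fun x hx => (hf x (Ico_subset_Icc_self hx)).hasDerivWithinAt)
      (fun x hx hfx => hzero x (Ico_subset_Icc_self hx) hfx.symm)
  intro x hx
  refine (hnonneg x hx).lt_of_ne' fun hfx => ?_
  have hax : a < x := hx.1.lt_of_ne (by rintro rfl; linarith)
  have hmin : IsLocalMinOn f (Icc a x) x :=
    IsMinOn.localize fun y hy => hfx ▸ hnonneg y ⟨hy.1, hy.2.trans hx.2⟩
  have hcone : a - x ∈ posTangentConeAt (Icc a x) x :=
    sub_mem_posTangentConeAt_of_segment_subset (segment_symm ℝ x a ▸ (segment_eq_Icc hax.le).le)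
  have := hmin.hasFDerivWithinAt_nonneg (hf x hx).hasDerivWithinAt.hasFDerivWithinAt hcone
  simp only [ContinuousLinearMap.toSpanSingleton_apply, smul_eq_mul] at this
  nlinarith [hzero x hx hfx]

theorem stmt10_general (T₁ T₂ : ℝ) (b : ℕ → ℝ → ℝ)
    (hderiv : ∀ j : ℕ, 1 ≤ j → ∀ t ∈ Set.Icc T₁ T₂,
      HasDerivAt (b j) (-(b j t)^2 + 2 * (b (j-1) t)^2) t)
    (hnonneg : ∀ j : ℕ, ∀ t ∈ Set.Icc T₁ T₂, 0 ≤ b j t)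
    (k : ℕ) (hk : 2 ≤ k)
    (hlow : ∀ t ∈ Set.Icc T₁ T₂, b (k-1) t < b (k-2) t)
    (hinit : b k T₁ < b (k-1) T₁) :
    ∀ t ∈ Set.Icc T₁ T₂, b k t < b (k-1) t := by
  obtain ⟨j, rfl⟩ : ∃ j, k = j + 2 := ⟨k - 2, by omega⟩
  simp only [Nat.add_sub_cancel, Nat.add_succ_sub_one] at hlow hinit ⊢
  have hgap : ∀ t ∈ Icc T₁ T₂, HasDerivAt (fun s => b (j + 1) s - b (j + 2) s)
      ((-(b (j + 1) t)^2 + 2 * (b j t)^2) - (-(b (j + 2) t)^2 + 2 * (b (j + 1) t)^2)) t :=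
    fun t ht => (hderiv (j + 1) (by omega) t ht).sub (hderiv (j + 2) (by omega) t ht)
  -- where the gap closes, its derivative is `2 (b_{k-2}² - b_{k-1}²) > 0`
  have hpos := pos_of_hasDerivAt_pos_of_eq_zero hgap (sub_pos.2 hinit) fun t ht heq => by
    rw [(sub_eq_zero.1 heq).symm]
    nlinarith [hlow t ht, hnonneg (j + 1) t ht]
  exact fun t ht => sub_pos.1 (hpos t ht)

/-- Comparison lemma for the inviscid discrete system `b_k' = −b_k² + 2 b_{k-1}²`:
if `b_{k-1} < b_{k-2}` on `[T₁, T₂]` and `b_k(T₁) < b_{k-1}(T₁)`, then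
`b_k < b_{k-1}` on all of `[T₁, T₂]`. -/
theorem stmt10 (T₁ T₂ : ℝ) (hT : T₁ ≤ T₂) (b : ℕ → ℝ → ℝ)
    (hb0 : ∀ t ∈ Set.Icc T₁ T₂, b 0 t = 0)
    (hderiv : ∀ j : ℕ, 1 ≤ j → ∀ t ∈ Set.Icc T₁ T₂,
      HasDerivAt (b j) (-(b j t)^2 + 2 * (b (j-1) t)^2) t)
    (hnonneg : ∀ j : ℕ, ∀ t ∈ Set.Icc T₁ T₂, 0 ≤ b j t)
    (k : ℕ) (hk : 2 ≤ k)
    (hlow : ∀ t ∈ Set.Icc T₁ T₂, b (k-1) t < b (k-2) t)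
    (hinit : b k T₁ < b (k-1) T₁) :
    ∀ t ∈ Set.Icc T₁ T₂, b k t < b (k-1) t :=
  stmt10_general T₁ T₂ b hderiv hnonneg k hk hlow hinit
end

section
/- Let 0 < α < 1/2 and j ≥ 2. Suppose b_j = √2 b_{j-1} where b_n := (a_n − a_{n-1}) 2^n > 0, and b_n ≤ √2 b_{n-1} for all n > j. Then D_j := ((ℒ^α a)_j − (ℒ^α a)_{j-1}) − (1/√2)((ℒ^α a)_{j-1} − (ℒ^α a)_{j-2}) > 0. -/
open Finset

noncomputable def tailSum (a : ℕ → ℝ) (k : ℕ) : ℝ :=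
  ∑' n : ℕ, (a k - a (k + 1 + n)) * (1 / 2 : ℝ) ^ (n + 1)

lemma hasSum_pow_succ_of_lt_one {q : ℝ} (h₀ : 0 ≤ q) (h₁ : q < 1) :
    HasSum (fun n : ℕ ↦ q ^ (n + 1)) (q / (1 - q)) := by
  simpa [pow_succ', div_eq_mul_inv] using (hasSum_geometric_of_lt_one h₀ h₁).mul_left q

lemma summable_tailSum {a : ℕ → ℝ} {M : ℝ} (hM : ∀ n, |a n| ≤ M) (k : ℕ) :
    Summable fun n : ℕ ↦ (a k - a (k + 1 + n)) * (1 / 2 : ℝ) ^ (n + 1) := by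
  have hgeom := (hasSum_pow_succ_of_lt_one (q := 1 / 2) (by norm_num) (by norm_num)).summable
  refine .of_norm_bounded (hgeom.mul_left (2 * M)) fun n ↦ ?_
  rw [Real.norm_eq_abs, abs_mul, abs_of_pos (by positivity : (0:ℝ) < (1 / 2) ^ (n + 1))]
  gcongr
  exact (abs_sub _ _).trans (by linarith [hM k, hM (k + 1 + n)])

lemma tailSum_eq_half_tailSum_succ_sub {a : ℕ → ℝ} {M : ℝ} (hM : ∀ n, |a n| ≤ M) (k : ℕ) :
    tailSum a k = tailSum a (k + 1) / 2 - (a (k + 1) - a k) := by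
  set f := fun n : ℕ ↦ (a k - a (k + 1 + n)) * (1 / 2 : ℝ) ^ (n + 1) with hf
  have h₁ : HasSum (fun n ↦ f (n + 1)) (tailSum a k - f 0) := by
    have := (hasSum_nat_add_iff' 1).mpr (summable_tailSum hM k).hasSum
    rwa [sum_range_one] at this
  have h₂ : HasSum (fun n ↦ f (n + 1))
      ((a k - a (k + 1)) / 2 * ((1 / 2) / (1 - 1 / 2)) + tailSum a (k + 1) / 2) :=
    (((hasSum_pow_succ_of_lt_one (q := 1 / 2) (by norm_num) (by norm_num)).mul_left
      ((a k - a (k + 1)) / 2)).add ((summable_tailSum hM (k + 1)).hasSum.div_const 2)).congr_fun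
      fun n ↦ by simp only [hf]; rw [show k + 1 + (n + 1) = k + 1 + 1 + n by omega]; ring
  have := h₁.unique h₂
  simp only [hf] at this
  norm_num at this
  linarith

lemma two_rpow_mul_natCast (α : ℝ) (n : ℕ) :
    (2:ℝ) ^ (2 * α * (n:ℝ)) = ((2:ℝ) ^ (2 * α)) ^ n := by
  rw [Real.rpow_mul (by norm_num), Real.rpow_natCast]

lemma two_rpow_neg_one_sub_natCast (n : ℕ) : (2:ℝ) ^ (-1 - (n:ℝ)) = (1 / 2) ^ (n + 1) := by
  rw [show (-1 - (n:ℝ)) = -((n + 1 : ℕ) : ℝ) by push_cast; ring, Real.rpow_neg (by norm_num),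
    Real.rpow_natCast, one_div, inv_pow]

lemma Ldiss_eq (α : ℝ) (a : ℕ → ℝ) (k : ℕ) :
    Ldiss α a k = ∑ n ∈ range k, (a k - a n) * ((2:ℝ) ^ (2 * α)) ^ n
      + ((2:ℝ) ^ (2 * α)) ^ k * tailSum a k := by
  simp only [Ldiss, tailSum, two_rpow_mul_natCast, two_rpow_neg_one_sub_natCast, ← tsum_mul_left]
  congr 1
  exact tsum_congr fun n ↦ by ring

lemma Ldiss_succ_sub (α : ℝ) (a : ℕ → ℝ) (k : ℕ) :
    Ldiss α a (k + 1) - Ldiss α a k =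
      (a (k + 1) - a k) * ∑ n ∈ range (k + 1), ((2:ℝ) ^ (2 * α)) ^ n
        + ((2:ℝ) ^ (2 * α)) ^ (k + 1) * tailSum a (k + 1)
        - ((2:ℝ) ^ (2 * α)) ^ k * tailSum a k := by
  have hsplit : ∑ n ∈ range k, (a (k + 1) - a n) * ((2:ℝ) ^ (2 * α)) ^ n
      = ∑ n ∈ range k, (a k - a n) * ((2:ℝ) ^ (2 * α)) ^ n
        + (a (k + 1) - a k) * ∑ n ∈ range k, ((2:ℝ) ^ (2 * α)) ^ n := by
    rw [mul_sum, ← sum_add_distrib]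
    exact sum_congr rfl fun n _ ↦ by ring
  rw [Ldiss_eq, Ldiss_eq, sum_range_succ, sum_range_succ, hsplit]
  ring

lemma Ldiss_second_diff_eq {a : ℕ → ℝ} {M : ℝ} (hM : ∀ n, |a n| ≤ M) (α : ℝ) (m : ℕ)
    (hd : a (m + 1) - a m = √2 * (a (m + 2) - a (m + 1))) :
    (Ldiss α a (m + 2) - Ldiss α a (m + 1)) - 1 / √2 * (Ldiss α a (m + 1) - Ldiss α a m) =
      ((2:ℝ) ^ (2 * α)) ^ m * ((2:ℝ) ^ (2 * α) - 1 / 2) *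
        ((2 + √2 / 2) * (a (m + 2) - a (m + 1))
          + ((2:ℝ) ^ (2 * α) - √2 / 4) * tailSum a (m + 2)) := by
  have hs : √2 ^ 2 = 2 := Real.sq_sqrt (by norm_num)
  have hinv : 1 / √2 = √2 / 2 := by field_simp; linarith
  rw [Ldiss_succ_sub, Ldiss_succ_sub, tailSum_eq_half_tailSum_succ_sub hM m,
    tailSum_eq_half_tailSum_succ_sub hM (m + 1), sum_range_succ _ (m + 1), hinv, hd]
  linear_combination (-(a (m + 2) - a (m + 1)) / 2 *
    (∑ n ∈ range (m + 1), ((2:ℝ) ^ (2 * α)) ^ n + ((2:ℝ) ^ (2 * α)) ^ m)) * hs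

lemma tailSum_ge_of_sub_le_geom {a : ℕ → ℝ} {M : ℝ} (hM : ∀ n, |a n| ≤ M) {j : ℕ} {d r : ℝ}
    (hr₀ : 0 ≤ r) (hr₁ : r < 1) (h : ∀ k, a (j + 1 + k) - a (j + k) ≤ d * r ^ (k + 1)) :
    -(r / (1 - r / 2) * d) ≤ tailSum a j := by
  set c := d * r / (1 - r) with hc_def
  have hc : c * (1 - r) = d * r := div_mul_cancel₀ _ (by linarith)
  have hpartial : ∀ n, a (j + 1 + n) - a j ≤ c * (1 - r ^ (n + 1)) := by
    intro n
    induction n with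
    | zero => simpa [hc] using h 0
    | succ n ih =>
      have hstep := h (n + 1)
      rw [show j + (n + 1) = j + 1 + n by omega] at hstep
      have : c * (1 - r ^ (n + 1 + 1)) = c * (1 - r ^ (n + 1)) + d * r ^ (n + 1 + 1) := by
        linear_combination r ^ (n + 1) * hc
      linarith
  have hlower :=
    (((hasSum_pow_succ_of_lt_one (q := 1 / 2) (by norm_num) (by norm_num)).mul_left c).sub
      ((hasSum_pow_succ_of_lt_one (q := r / 2) (by positivity) (by linarith)).mul_left c)).neg
  refine (le_of_eq ?_).trans (hasSum_le (fun n ↦ ?_) hlower (summable_tailSum hM j).hasSum)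
  · have : 1 - r ≠ 0 := by linarith
    have : 2 - r ≠ 0 := by linarith
    rw [hc_def]
    field_simp
    ring
  · have hn : -(c * (1 - r ^ (n + 1))) ≤ a j - a (j + 1 + n) := by linarith [hpartial n]
    calc -(c * (1 / 2) ^ (n + 1) - c * (r / 2) ^ (n + 1))
        = -(c * (1 - r ^ (n + 1))) * (1 / 2) ^ (n + 1) := by ring
      _ ≤ (a j - a (j + 1 + n)) * (1 / 2) ^ (n + 1) :=
        mul_le_mul_of_nonneg_right hn (by positivity)

lemma sub_le_mul_pow_of_weighted_le {a : ℕ → ℝ} {c : ℝ} (hc : 0 ≤ c) {j : ℕ}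
    (h : ∀ n, j < n → (a n - a (n - 1)) * 2 ^ n ≤ c * ((a (n - 1) - a (n - 2)) * 2 ^ (n - 1)))
    (k : ℕ) : a (j + 1 + k) - a (j + k) ≤ (a j - a (j - 1)) * (c / 2) ^ (k + 1) := by
  have hstep : ∀ i, a (j + i + 1) - a (j + i) ≤ c / 2 * (a (j + i) - a (j + i - 1)) := by
    intro i
    have hi := h (j + i + 1) (by omega)
    rw [Nat.add_sub_cancel, show j + i + 1 - 2 = j + i - 1 by omega, pow_succ] at hi
    have : (0:ℝ) < 2 ^ (j + i) := by positivity
    nlinarith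
  have := le_geom (u := fun i ↦ a (j + i) - a (j + i - 1)) (by positivity) (k + 1)
    fun i _ ↦ hstep i
  simp only [add_zero, Nat.add_sub_cancel, ← add_assoc] at this
  rw [add_right_comm]
  linarith

lemma tailSum_ge_of_weighted_le {a : ℕ → ℝ} {M : ℝ} (hM : ∀ n, |a n| ≤ M) {j : ℕ}
    (h : ∀ n, j < n → (a n - a (n - 1)) * 2 ^ n ≤ √2 * ((a (n - 1) - a (n - 2)) * 2 ^ (n - 1))) :
    -(2 / (2 * √2 - 1) * (a j - a (j - 1))) ≤ tailSum a j := by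
  have hs : √2 ^ 2 = 2 := Real.sq_sqrt (by norm_num)
  have hs₁ : 1 < √2 := by nlinarith [Real.sqrt_nonneg 2]
  convert tailSum_ge_of_sub_le_geom hM (by positivity) (by nlinarith)
    (sub_le_mul_pow_of_weighted_le (by positivity) h) using 3
  have : 2 * √2 - 1 ≠ 0 := by linarith
  field_simp
  rw [eq_div_iff (by nlinarith)]
  linear_combination (-2) * hs

lemma weighted_combination_pos {β d T : ℝ} (hβ₀ : √2 / 4 ≤ β) (hβ₁ : β < 2) (hd : 0 < d)
    (hT : -(2 / (2 * √2 - 1) * d) ≤ T) : 0 < (2 + √2 / 2) * d + (β - √2 / 4) * T := by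
  have hs : √2 ^ 2 = 2 := Real.sq_sqrt (by norm_num)
  have hs₁ : 1 < √2 := by nlinarith [Real.sqrt_nonneg 2]
  have hcoef : (2 + √2 / 2) * d - (β - √2 / 4) * (2 / (2 * √2 - 1) * d)
      = (4 * √2 - 2 * β) / (2 * √2 - 1) * d := by
    have : 2 * √2 - 1 ≠ 0 := by linarith
    field_simp
    linear_combination 8 * hs
  have : 0 < (4 * √2 - 2 * β) / (2 * √2 - 1) * d :=
    mul_pos (div_pos (by linarith) (by linarith)) hd
  nlinarith [mul_le_mul_of_nonneg_left hT (by linarith : 0 ≤ β - √2 / 4)]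

/-- Claim 2 of the dissipation comparison: if `b_j = √2 b_{j-1}` with `b_n > 0`, and
`b_n ≤ √2 b_{n-1}` for all `n > j`, then
`D_j = ((ℒa)_j − (ℒa)_{j-1}) − (1/√2)((ℒa)_{j-1} − (ℒa)_{j-2}) > 0`. -/
theorem stmt13 (α : ℝ) (hα0 : 0 < α) (hα1 : α < 1/2)
    (a : ℕ → ℝ) (hbdd : ∃ M : ℝ, ∀ n, |a n| ≤ M)
    (j : ℕ) (hj : 2 ≤ j)
    (hpos : ∀ n : ℕ, 1 ≤ n → 0 < (a n - a (n-1)) * 2^n)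
    (heq : (a j - a (j-1)) * 2^j = Real.sqrt 2 * ((a (j-1) - a (j-2)) * 2^(j-1)))
    (hmono : ∀ n : ℕ, j < n →
      (a n - a (n-1)) * 2^n ≤ Real.sqrt 2 * ((a (n-1) - a (n-2)) * 2^(n-1))) :
    0 < (Ldiss α a j - Ldiss α a (j-1))
        - (1 / Real.sqrt 2) * (Ldiss α a (j-1) - Ldiss α a (j-2)) := by
  obtain ⟨M, hM⟩ := hbdd
  have htail := tailSum_ge_of_weighted_le hM hmono
  obtain ⟨m, rfl⟩ : ∃ m, j = m + 2 := ⟨j - 2, by omega⟩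
  have hd := hpos (m + 2) (by omega)
  simp only [Nat.add_sub_cancel, show m + 2 - 1 = m + 1 by omega] at heq htail hd ⊢
  have hs : √2 ^ 2 = 2 := Real.sq_sqrt (by norm_num)
  have hd' : a (m + 1) - a m = √2 * (a (m + 2) - a (m + 1)) := by
    have h2 : (a (m + 2) - a (m + 1)) * 2 = √2 * (a (m + 1) - a m) :=
      mul_right_cancel₀ (pow_ne_zero (m + 1) two_ne_zero)
        (by rw [pow_succ] at heq; linear_combination heq)
    linear_combination (-(√2 / 2)) * h2 - (a (m + 1) - a m) / 2 * hs
  have hβ₁ : 1 < (2:ℝ) ^ (2 * α) := Real.one_lt_rpow (by norm_num) (by linarith)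
  have hβ₂ : (2:ℝ) ^ (2 * α) < 2 := by
    simpa using
      Real.rpow_lt_rpow_of_exponent_lt (by norm_num : (1:ℝ) < 2) (by linarith : 2 * α < 1)
  rw [Ldiss_second_diff_eq hM α m hd']
  refine mul_pos (mul_pos (by positivity) (by linarith)) (weighted_combination_pos ?_ hβ₂ ?_ htail)
  · nlinarith [Real.sqrt_nonneg 2]
  · exact pos_of_mul_pos_left hd (by positivity)
end
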